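/- Let G be a finite abelian group, H a subgroup of G, ψ : H → ℂˣ a group homomorphism, and λ ∈ ℂ[G]. Then ψ(N_{G/H}(λ)) = ∏_{φ} φ(λ), where the product is over all group homomorphisms φ : G → ℂˣ whose restriction to H equals ψ, and where ψ : ℂ[H] → ℂ and φ : ℂ[G] → ℂ denote the induced ℂ-algebra homomorphisms. -/

import Mathlib

/-- The norm map `N_{G/H} : ℂ[G] → ℂ[H]`: the determinant, over `ℂ[H]`, of the `ℂ[H]`-linear
endomorphism of `ℂ[G]` given by multiplication by `λ`, where `ℂ[G]` is a `ℂ[H]`-module via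
the inclusion-induced ring homomorphism `ℂ[H] → ℂ[G]`. -/
noncomputable def grpNorm (G : Type*) [CommGroup G] (H : Subgroup G)
    (lam : MonoidAlgebra ℂ G) : MonoidAlgebra ℂ ↥H :=
  letI : Algebra (MonoidAlgebra ℂ ↥H) (MonoidAlgebra ℂ G) :=
    (MonoidAlgebra.mapDomainRingHom ℂ H.subtype).toAlgebra
  LinearMap.det (LinearMap.mulLeft (MonoidAlgebra ℂ ↥H) lam)

/-- The `ℂ`-algebra homomorphism `ℂ[Γ] → ℂ` induced by a character `χ : Γ → ℂˣ`. -/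
noncomputable def charAlgHom (Γ : Type*) [CommGroup Γ] (χ : Γ →* ℂˣ) :
    MonoidAlgebra ℂ Γ →ₐ[ℂ] ℂ :=
  MonoidAlgebra.lift ℂ ℂ Γ ((Units.coeHom ℂ).comp χ)

/-!
Let `b` be the basis of `ℂ[G]` over `ℂ[H]` given by coset representatives and `A` the matrix of
multiplication by `λ` in it. A character `φ` extending `ψ` is `ψ`-semilinear, so the row vector
`(φ(b_q))_q` is a left eigenvector of `ψ(A)` with eigenvalue `φ(λ)`. By Dedekind's independence of
characters these vectors are linearly independent, and there are exactly `[G : H]` of them, so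
`ψ(det A)` is the product of the `φ(λ)`.
-/

lemma QuotientGroup.mul_inv_out_mem {G : Type*} [CommGroup G] (H : Subgroup G) (g : G) :
    g * (g : G ⧸ H).out⁻¹ ∈ H := by
  simpa [mul_comm] using (QuotientGroup.eq (s := H)).mp (QuotientGroup.out_eq' (g : G ⧸ H))

namespace MonoidAlgebra

variable {k G : Type*} [CommRing k] [CommGroup G] (H : Subgroup G)

noncomputable instance algebraSubgroup : Algebra (MonoidAlgebra k H) (MonoidAlgebra k G) :=
  (mapDomainRingHom k H.subtype).toAlgebra

lemma subgroup_smul_def (c : MonoidAlgebra k H) (x : MonoidAlgebra k G) :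
    c • x = mapDomainRingHom k H.subtype c * x :=
  Algebra.smul_def c x

lemma coeff_subgroup_smul_single (c : MonoidAlgebra k H) (a g : G) :
    (c • single a (1 : k)).coeff g = Finsupp.mapDomain H.subtype c.coeff (g * a⁻¹) := by
  rw [subgroup_smul_def, coeff_mul_single_apply, mul_one]
  rfl

lemma linearIndependent_single_out :
    LinearIndependent (MonoidAlgebra k H) fun q : G ⧸ H => single q.out (1 : k) := by
  classical
  rw [linearIndependent_iff]
  intro l hl
  ext q h
  have hcoeff := congrArg (fun x : MonoidAlgebra k G => x.coeff ((h : G) * q.out)) hl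
  simp only [Finsupp.linearCombination_apply, coeff_finsuppSum, Finsupp.sum_apply,
    coeff_subgroup_smul_single] at hcoeff
  rw [Finsupp.sum_eq_single q, mul_inv_cancel_right] at hcoeff
  · simpa using (Finsupp.mapDomain_apply H.subtype_injective (l q).coeff h).symm.trans hcoeff
  · intro q' _ hq'
    refine Finsupp.mapDomain_of_notMem_range _ _ fun ⟨h', hh'⟩ => hq' ?_
    rw [← QuotientGroup.out_eq' q, ← QuotientGroup.out_eq' q', QuotientGroup.eq]
    have hmem : (h : G) * q.out * q'.out⁻¹ ∈ H := hh' ▸ h'.2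
    simpa [mul_comm, mul_assoc] using H.mul_mem (H.inv_mem h.2) hmem
  · simp

lemma single_eq_smul_single_out (g : G) (r : k) :
    single g r = single (⟨g * (g : G ⧸ H).out⁻¹, QuotientGroup.mul_inv_out_mem H g⟩ : H) r •
      single (g : G ⧸ H).out (1 : k) := by
  rw [subgroup_smul_def, mapDomainRingHom_apply, mapDomain_single, single_mul_single,
    Subgroup.subtype_apply, inv_mul_cancel_right, mul_one]

lemma span_single_out :
    ⊤ ≤ Submodule.span (MonoidAlgebra k H) (Set.range fun q : G ⧸ H => single q.out (1 : k)) := by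
  rintro x -
  induction x using MonoidAlgebra.induction with
  | zero => exact zero_mem _
  | single_add g r _ _ _ ih =>
    refine add_mem ?_ ih
    rw [single_eq_smul_single_out H g r]
    exact Submodule.smul_mem _ _ (Submodule.subset_span ⟨_, rfl⟩)

noncomputable def cosetBasis : Module.Basis (G ⧸ H) (MonoidAlgebra k H) (MonoidAlgebra k G) :=
  .mk (linearIndependent_single_out H) (span_single_out H)

end MonoidAlgebra

section Characters

open MonoidAlgebra

variable {G : Type*} [CommGroup G]

lemma charAlgHom_single (χ : G →* ℂˣ) (g : G) (c : ℂ) :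
    charAlgHom G χ (single g c) = c * χ g := by
  simp [charAlgHom, lift_single]

lemma charAlgHom_injective : Function.Injective (charAlgHom G) := by
  intro χ χ' h
  ext g
  simpa [charAlgHom_single] using DFunLike.congr_fun h (single g 1)

lemma charAlgHom_comp_algebraMap {H : Subgroup G} {ψ : H →* ℂˣ} {φ : G →* ℂˣ}
    (hφ : φ.comp H.subtype = ψ) :
    (charAlgHom G φ : MonoidAlgebra ℂ G →+* ℂ).comp (algebraMap (MonoidAlgebra ℂ H) _) =
      charAlgHom H ψ := by
  refine MonoidAlgebra.ringHom_ext (fun c => ?_) fun h => ?_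
  · simp [RingHom.algebraMap_toAlgebra, charAlgHom_single]
  · simp [RingHom.algebraMap_toAlgebra, charAlgHom_single, ← hφ]

end Characters

theorem CommGroup.card_extensions_eq_card_quotient {G M : Type*} [CommGroup G] [Finite G]
    [CommMonoid M] [HasEnoughRootsOfUnity M (Monoid.exponent G)] (H : Subgroup G)
    (ψ : H →* Mˣ) :
    Nat.card {φ : G →* Mˣ // φ.comp H.subtype = ψ} = Nat.card (G ⧸ H) := by
  rw [← CommGroup.card_domRestrictHom_ker M H]
  exact Nat.card_congr
    (MonoidHom.fiberEquivKerOfSurjective (MonoidHom.domRestrict_surjective M H) ψ)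

namespace Matrix

theorem det_eq_prod_of_linearIndependent_vecMul_eq_smul {K ι κ : Type*} [Field K]
    [Fintype ι] [DecidableEq ι] [Fintype κ] (M : Matrix ι ι K) (v : κ → ι → K) (d : κ → K)
    (hv : LinearIndependent K v) (hcard : Nat.card κ = Nat.card ι)
    (heig : ∀ j, v j ᵥ* M = d j • v j) :
    M.det = ∏ j, d j := by
  obtain ⟨e⟩ : Nonempty (ι ≃ κ) := Finite.card_eq.mp hcard.symm
  let Q : Matrix ι ι K := .of fun i => v (e i)
  have hQ : IsUnit Q.det :=
    (isUnit_iff_isUnit_det Q).mp (linearIndependent_rows_iff_isUnit.mp (hv.comp e e.injective))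
  have hQM : Q * M = diagonal (d ∘ e) * Q := by
    ext i l
    rw [diagonal_mul]
    exact congrFun (heig (e i)) l
  have hdet := congrArg det hQM
  rw [det_mul, det_mul, det_diagonal, mul_comm Q.det] at hdet
  rw [mul_right_cancel₀ hQ.ne_zero hdet]
  exact e.prod_comp d

end Matrix

namespace Module.Basis

open Matrix

variable {R S K ι : Type*} [CommRing R] [CommRing S] [Algebra R S] [Fintype ι]
  (b : Basis ι R S)

lemma ringHom_apply_eq_sum_repr [CommRing K] {g : R →+* K} {f : S →+* K}
    (hfg : f.comp (algebraMap R S) = g) (x : S) :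
    f x = ∑ i, g (b.repr x i) * f (b i) := by
  conv_lhs => rw [← b.sum_repr x]
  simp [Algebra.smul_def, ← hfg]

lemma vecMul_map_leftMulMatrix [DecidableEq ι] [CommRing K] {g : R →+* K} {f : S →+* K}
    (hfg : f.comp (algebraMap R S) = g) (s : S) :
    (fun i => f (b i)) ᵥ* (Algebra.leftMulMatrix b s).map g = f s • fun i => f (b i) := by
  ext l
  rw [Pi.smul_apply, smul_eq_mul, ← map_mul, b.ringHom_apply_eq_sum_repr hfg (s * b l)]
  simp [vecMul, dotProduct, Algebra.leftMulMatrix_eq_repr_mul, mul_comm]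

lemma linearIndependent_ringHom_apply [Field K] {κ : Type*} [Fintype κ] {g : R →+* K}
    {f : κ → S →+* K} (hf : Function.Injective f) (hfg : ∀ j, (f j).comp (algebraMap R S) = g) :
    LinearIndependent K fun j i => f j (b i) := by
  rw [Fintype.linearIndependent_iff]
  intro c hc
  have hci : ∀ i, ∑ j, c j * f j (b i) = 0 := fun i => by simpa using congrFun hc i
  have hmono := (linearIndependent_monoidHom S K).comp (fun j => (f j : S →* K))
    (RingHom.coe_monoidHom_injective.comp hf)
  refine Fintype.linearIndependent_iff.mp hmono c (funext fun x => ?_)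
  simp only [Finset.sum_apply, Pi.smul_apply, Function.comp_apply, MonoidHom.coe_coe,
    Pi.zero_apply]
  calc ∑ j, c j • f j x = ∑ i, g (b.repr x i) * ∑ j, c j * f j (b i) := by
        simp only [smul_eq_mul, fun j => b.ringHom_apply_eq_sum_repr (hfg j) x, Finset.mul_sum]
        rw [Finset.sum_comm]
        exact Finset.sum_congr rfl fun _ _ => Finset.sum_congr rfl fun _ _ => by ring
    _ = 0 := by simp [hci]

end Module.Basis

theorem Algebra.map_norm_eq_prod_of_basis {R S K ι κ : Type*} [CommRing R] [CommRing S]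
    [Algebra R S] [Field K] [Fintype ι] [Fintype κ] (b : Module.Basis ι R S) (g : R →+* K)
    (f : κ → S →+* K) (hf : Function.Injective f) (hfg : ∀ j, (f j).comp (algebraMap R S) = g)
    (hcard : Nat.card κ = Nat.card ι) (s : S) :
    g (Algebra.norm R s) = ∏ j, f j s := by
  classical
  rw [Algebra.norm_eq_matrix_det b, RingHom.map_det, RingHom.mapMatrix_apply]
  exact Matrix.det_eq_prod_of_linearIndependent_vecMul_eq_smul _ _ _
    (b.linearIndependent_ringHom_apply hf hfg) hcard fun j => b.vecMul_map_leftMulMatrix (hfg j) s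

/-- Let `G` be a finite abelian group, `H ≤ G`, `ψ : H → ℂˣ` a group
homomorphism and `λ ∈ ℂ[G]`.  Then `ψ(N_{G/H}(λ)) = ∏_φ φ(λ)`, the (finite) product running
over all group homomorphisms `φ : G → ℂˣ` whose restriction to `H` is `ψ`. -/
theorem stmt12 (G : Type*) [CommGroup G] [Finite G] (H : Subgroup G) (ψ : ↥H →* ℂˣ)
    (lam : MonoidAlgebra ℂ G) :
    charAlgHom ↥H ψ (grpNorm G H lam) =
      ∏ᶠ (φ : G →* ℂˣ) (_ : φ.comp H.subtype = ψ), charAlgHom G φ lam := by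
  let E := {φ : G →* ℂˣ // φ.comp H.subtype = ψ}
  have : Fintype E := Fintype.ofFinite E
  have : Fintype (G ⧸ H) := Fintype.ofFinite _
  rw [← finprod_subtype_eq_finprod_cond, finprod_eq_prod_of_fintype]
  -- with the instance `MonoidAlgebra.algebraSubgroup`, `grpNorm G H` is `Algebra.norm ℂ[H]` by `rfl`
  exact Algebra.map_norm_eq_prod_of_basis (MonoidAlgebra.cosetBasis H)
    (charAlgHom H ψ : MonoidAlgebra ℂ H →+* ℂ)
    (fun φ : E => (charAlgHom G φ.1 : MonoidAlgebra ℂ G →+* ℂ))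
    (fun φ φ' h => Subtype.ext (charAlgHom_injective (AlgHom.coe_ringHom_injective h)))
    (fun φ => charAlgHom_comp_algebraMap φ.2)
    (CommGroup.card_extensions_eq_card_quotient H ψ) lam
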